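/- arXiv:2407.15973 — 3 statements merged into one kernel-verified Lean document; each statement's English description precedes it below -/
import Mathlib

section
/- Let A and D be symmetric positive definite n×n matrices and suppose every eigenvalue λ of D⁻¹A satisfies 0 < λ < 2. Then for every k ≥ 1, the preconditioner M_k⁻¹ = ∑_{j=0}^{k-1}(I - D⁻¹A)^j D⁻¹ is symmetric positive definite whenever k is odd. -/
/-!
Write `D⁻¹ = C Cᴴ` with `C` invertible. Pushing `C` through the geometric sum turns the
preconditioner into `C p(S) Cᴴ` with `S = Cᴴ A C` symmetric and `p(x) = ∑_{j<k} (1 - x)^j`.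
For odd `k` a geometric sum of odd length is positive at every real point, so `p(S)` has
positive spectrum and is positive definite, and so is its congruence by `C`.
-/

open Finset

theorem geom_sum_one_sub_mul_mul {R : Type*} [Ring R] (x y : R) (k : ℕ) :
    (∑ j ∈ range k, (1 - x * y) ^ j) * x = x * ∑ j ∈ range k, (1 - y * x) ^ j := by
  have h : SemiconjBy x (1 - y * x) (1 - x * y) := by
    simp only [SemiconjBy, mul_sub, sub_mul, mul_one, one_mul, mul_assoc]
  rw [sum_mul, mul_sum]
  exact sum_congr rfl fun j _ => (h.pow_right j).eq.symm

section CFC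

variable {A : Type*} [PartialOrder A] [Ring A] [StarRing A] [TopologicalSpace A]
  [StarOrderedRing A] [Algebra ℝ A] [ContinuousFunctionalCalculus ℝ A IsSelfAdjoint]
  [NonnegSpectrumClass ℝ A]

theorem IsSelfAdjoint.isStrictlyPositive_geom_sum {b : A} (hb : IsSelfAdjoint b) {k : ℕ}
    (hk : Odd k) : IsStrictlyPositive (∑ j ∈ range k, b ^ j) := by
  have hcfc : cfc (fun x : ℝ => ∑ j ∈ range k, x ^ j) b = ∑ j ∈ range k, b ^ j := by
    rw [← Finset.sum_fn, cfc_sum (fun j (x : ℝ) => x ^ j) b (range k)]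
    exact sum_congr rfl fun j _ => cfc_pow_id b j
  rw [← hcfc, cfc_isStrictlyPositive_iff _ b]
  exact fun _ _ => hk.geom_sum_pos

variable [IsSemitopologicalRing A] [T2Space A]

theorem IsStrictlyPositive.isStrictlyPositive_neumann_sum {d a : A} (hd : IsStrictlyPositive d)
    (ha : IsSelfAdjoint a) {k : ℕ} (hk : Odd k) :
    IsStrictlyPositive (∑ j ∈ range k, (1 - Ring.inverse d * a) ^ j * Ring.inverse d) := by
  obtain ⟨c, hc, hdc⟩ :=
    CStarAlgebra.isStrictlyPositive_iff_eq_mul_star_self.mp hd.ringInverse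
  have hS : IsSelfAdjoint (1 - star c * a * c) := .sub (.one A) (ha.conjugate' c)
  rw [← sum_mul, hdc, ← mul_assoc, mul_assoc c, geom_sum_one_sub_mul_mul]
  exact hc.isStrictlyPositive_star_right_conjugate_iff.mpr (hS.isStrictlyPositive_geom_sum hk)

end CFC

theorem neumann_preconditioner_posDef_general {n : ℕ} (A D : Matrix (Fin n) (Fin n) ℝ)
    (hA : A.PosDef) (hD : D.PosDef)
    (k : ℕ) (hk : Odd k) :
    (∑ j ∈ Finset.range k, (1 - D⁻¹ * A) ^ j * D⁻¹).PosDef := by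
  open scoped MatrixOrder in
  rw [← Matrix.isStrictlyPositive_iff_posDef, Matrix.nonsing_inv_eq_ringInverse]
  exact hD.isStrictlyPositive.isStrictlyPositive_neumann_sum hA.isHermitian hk

/-- If `A` and `D` are SPD and every eigenvalue `λ` of `D⁻¹A` satisfies `0 < λ < 2`, then for
every odd `k ≥ 1` the preconditioner `M_k⁻¹ = ∑_{j<k}(I - D⁻¹A)^j D⁻¹` is SPD. -/
theorem neumann_preconditioner_posDef {n : ℕ} (A D : Matrix (Fin n) (Fin n) ℝ)
    (hA : A.PosDef) (hD : D.PosDef)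
    (hspec : ∀ μ ∈ spectrum ℝ (D⁻¹ * A), 0 < μ ∧ μ < 2)
    (k : ℕ) (hk1 : 1 ≤ k) (hk : Odd k) :
    (∑ j ∈ Finset.range k, (1 - D⁻¹ * A) ^ j * D⁻¹).PosDef :=
  neumann_preconditioner_posDef_general A D hA hD k hk
end

section
/- Suppose A = D_b - N with D_b block diagonal and A strictly diagonally dominant by rows. Then ‖D_b⁻¹N‖_∞ < 1, i.e., the block-Jacobi iteration matrix I - D_b⁻¹A has infinity norm less than 1, so the block-Jacobi Neumann series preconditioner converges to A⁻¹ as k → ∞. -/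
open Filter Topology

/-- The maximum-absolute-row-sum (infinity operator) norm of a matrix. -/
noncomputable def infNorm {n : ℕ} [NeZero n] (M : Matrix (Fin n) (Fin n) ℝ) : ℝ :=
  Finset.univ.sup' Finset.univ_nonempty fun i => ∑ j, |M i j|

set_option linter.unusedSectionVars false

section aux

variable {n nb : ℕ} [NeZero n]

/-- The block diagonal part is strictly diagonally dominant, hence invertible. -/
lemma aux_Db_unit (A : Matrix (Fin n) (Fin n) ℝ) (π : Fin n → Fin nb)
    (hdom : ∀ i, ∑ j ∈ Finset.univ.erase i, |A i j| < |A i i|) :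
    IsUnit (Matrix.of fun i j => if π i = π j then A i j else (0:ℝ)).det := by
  set Db : Matrix (Fin n) (Fin n) ℝ := Matrix.of fun i j => if π i = π j then A i j else 0 with hDb
  refine isUnit_iff_ne_zero.mpr (det_ne_zero_of_sum_row_lt_diag fun i => ?_)
  have h1 : ‖Db i i‖ = |A i i| := by simp [hDb, Real.norm_eq_abs]
  have h2 : ∑ j ∈ Finset.univ.erase i, ‖Db i j‖ ≤ ∑ j ∈ Finset.univ.erase i, |A i j| := by
    refine Finset.sum_le_sum fun j _ => ?_
    by_cases h : π i = π j <;> simp [hDb, h, Real.norm_eq_abs, abs_nonneg]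
  rw [h1]
  exact lt_of_le_of_lt h2 (hdom i)

/-- The key estimate: every row sum of `Db⁻¹ (Db - A)` is at most some `c < 1`. -/
lemma aux_rowsum (A : Matrix (Fin n) (Fin n) ℝ) (π : Fin n → Fin nb)
    (hdom : ∀ i, ∑ j ∈ Finset.univ.erase i, |A i j| < |A i i|) :
    ∃ c : ℝ, c < 1 ∧ ∀ i, ∑ j,
      |((Matrix.of fun i j => if π i = π j then A i j else (0:ℝ))⁻¹ *
        ((Matrix.of fun i j => if π i = π j then A i j else (0:ℝ)) - A)) i j| ≤ c := by
  set Db : Matrix (Fin n) (Fin n) ℝ := Matrix.of fun i j => if π i = π j then A i j else 0 with hDb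
  have hDbunit : IsUnit Db.det := aux_Db_unit A π hdom
  set sIn : Fin n → ℝ := fun i => ∑ j ∈ Finset.univ.erase i, |Db i j| with hsIn
  set sOut : Fin n → ℝ := fun i => ∑ j, |(Db - A) i j| with hsOut
  have habs : ∀ i j, |Db i j| + |(Db - A) i j| = |A i j| := by
    intro i j
    by_cases h : π i = π j <;> simp [hDb, h, Matrix.sub_apply, abs_neg]
  have hkey : ∀ i, sIn i + sOut i < |A i i| := by
    intro i
    have h0 : |(Db - A) i i| = 0 := by simp [hDb, Matrix.sub_apply]
    have : sOut i = ∑ j ∈ Finset.univ.erase i, |(Db - A) i j| :=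
      (Finset.sum_erase Finset.univ (f := fun j => |(Db - A) i j|) h0).symm
    rw [hsIn, this, ← Finset.sum_add_distrib]
    calc ∑ j ∈ Finset.univ.erase i, (|Db i j| + |(Db - A) i j|)
        = ∑ j ∈ Finset.univ.erase i, |A i j| := Finset.sum_congr rfl fun j _ => habs i j
      _ < |A i i| := hdom i
  have hOutNonneg : ∀ i, 0 ≤ sOut i := fun i =>
    Finset.sum_nonneg fun j _ => abs_nonneg _
  have hpos : ∀ i, 0 < |A i i| - sIn i := by
    intro i; have := hkey i; have := hOutNonneg i; linarith
  set c : ℝ := Finset.univ.sup' Finset.univ_nonempty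
    (fun i => sOut i / (|A i i| - sIn i)) with hc
  have hc1 : c < 1 := by
    rw [hc, Finset.sup'_lt_iff]
    intro i _
    rw [div_lt_one (hpos i)]
    have := hkey i; linarith
  have hcs : ∀ i, sOut i ≤ c * (|A i i| - sIn i) := by
    intro i
    have h := Finset.le_sup' (fun i => sOut i / (|A i i| - sIn i)) (Finset.mem_univ i)
    rw [← hc] at h
    calc sOut i = sOut i / (|A i i| - sIn i) * (|A i i| - sIn i) := by
          rw [div_mul_cancel₀ _ (ne_of_gt (hpos i))]
      _ ≤ c * (|A i i| - sIn i) :=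
          mul_le_mul_of_nonneg_right h (le_of_lt (hpos i))
  set J : Matrix (Fin n) (Fin n) ℝ := Db⁻¹ * (Db - A) with hJ
  -- vector bound
  have hvec : ∀ x : Fin n → ℝ, (∀ j, |x j| ≤ 1) → ∀ i, |J.mulVec x i| ≤ c := by
    intro x hx
    set y := J.mulVec x with hy
    have hDby : Db.mulVec y = (Db - A).mulVec x := by
      rw [hy, hJ, Matrix.mulVec_mulVec, ← Matrix.mul_assoc,
        Matrix.mul_nonsing_inv _ hDbunit, Matrix.one_mul]
    obtain ⟨i0, -, hi0⟩ := Finset.exists_mem_eq_sup' Finset.univ_nonempty (fun i => |y i|)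
    have hle : ∀ j, |y j| ≤ |y i0| := fun j =>
      hi0 ▸ Finset.le_sup' (fun i => |y i|) (Finset.mem_univ j)
    suffices h : |y i0| ≤ c by intro i; exact (hle i).trans h
    have hrow : ∑ j, Db i0 j * y j = ∑ j, (Db - A) i0 j * x j := by
      have := congrFun hDby i0
      simpa [Matrix.mulVec, dotProduct] using this
    have hsplit : Db i0 i0 * y i0 =
        ∑ j, (Db - A) i0 j * x j - ∑ j ∈ Finset.univ.erase i0, Db i0 j * y j := by
      have h3 : Db i0 i0 * y i0 + ∑ j ∈ Finset.univ.erase i0, Db i0 j * y j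
          = ∑ j, Db i0 j * y j :=
        Finset.add_sum_erase Finset.univ (fun j => Db i0 j * y j) (Finset.mem_univ i0)
      rw [← hrow]; linarith
    have hDii : Db i0 i0 = A i0 i0 := by simp [hDb]
    have hineq : |A i0 i0| * |y i0| ≤ sOut i0 + sIn i0 * |y i0| := by
      have h1 : |A i0 i0| * |y i0| = |Db i0 i0 * y i0| := by
        rw [abs_mul, hDii]
      rw [h1, hsplit]
      calc |∑ j, (Db - A) i0 j * x j - ∑ j ∈ Finset.univ.erase i0, Db i0 j * y j|
          ≤ |∑ j, (Db - A) i0 j * x j| + |∑ j ∈ Finset.univ.erase i0, Db i0 j * y j| :=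
            abs_sub _ _
        _ ≤ (∑ j, |(Db - A) i0 j * x j|) + ∑ j ∈ Finset.univ.erase i0, |Db i0 j * y j| :=
            add_le_add (Finset.abs_sum_le_sum_abs _ _) (Finset.abs_sum_le_sum_abs _ _)
        _ ≤ sOut i0 + sIn i0 * |y i0| := by
            refine add_le_add ?_ ?_
            · refine Finset.sum_le_sum fun j _ => ?_
              rw [abs_mul]
              exact mul_le_of_le_one_right (abs_nonneg _) (hx j)
            · rw [hsIn, Finset.sum_mul]
              refine Finset.sum_le_sum fun j _ => ?_
              rw [abs_mul]
              exact mul_le_mul_of_nonneg_left (hle j) (abs_nonneg _)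
    have h2 : (|A i0 i0| - sIn i0) * |y i0| ≤ (|A i0 i0| - sIn i0) * c := by
      have := hcs i0; nlinarith
    exact le_of_mul_le_mul_left h2 (hpos i0)
  refine ⟨c, hc1, fun i => ?_⟩
  set x : Fin n → ℝ := fun j => if 0 ≤ J i j then 1 else -1 with hx
  have hx1 : ∀ j, |x j| ≤ 1 := by
    intro j; rw [hx]; dsimp only; split <;> simp
  have hxs : J.mulVec x i = ∑ j, |J i j| := by
    simp only [Matrix.mulVec, dotProduct]
    refine Finset.sum_congr rfl fun j _ => ?_
    rw [hx]; dsimp only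
    split
    · next h => rw [mul_one, abs_of_nonneg h]
    · next h => rw [mul_neg_one, abs_of_neg (lt_of_not_ge h)]
  calc ∑ j, |J i j| = J.mulVec x i := hxs.symm
    _ ≤ |J.mulVec x i| := le_abs_self _
    _ ≤ c := hvec x hx1 i

end aux

/-- If `A = D_b - N` with `D_b` the block-diagonal part of a strictly row diagonally dominant
matrix `A`, then `D_b` is invertible, `‖D_b⁻¹N‖_∞ < 1`, and the block-Jacobi Neumann series
preconditioner converges to `A⁻¹` as `k → ∞`. -/
theorem block_jacobi_neumann_converges {n nb : ℕ} [NeZero n]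
    (A : Matrix (Fin n) (Fin n) ℝ) (π : Fin n → Fin nb)
    (hdom : ∀ i, ∑ j ∈ Finset.univ.erase i, |A i j| < |A i i|) :
    let Db : Matrix (Fin n) (Fin n) ℝ := Matrix.of fun i j => if π i = π j then A i j else 0
    IsUnit Db.det ∧ infNorm (Db⁻¹ * (Db - A)) < 1 ∧
      Tendsto (fun k : ℕ => ∑ j ∈ Finset.range k, (1 - Db⁻¹ * A) ^ j * Db⁻¹)
        atTop (𝓝 A⁻¹) := by
  intro Db
  have hDbunit : IsUnit Db.det := aux_Db_unit A π hdom
  obtain ⟨c, hc1, hrs⟩ := aux_rowsum A π hdom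
  have heq : Db⁻¹ * (Db - A) = 1 - Db⁻¹ * A := by
    rw [Matrix.mul_sub, Matrix.nonsing_inv_mul _ hDbunit]
  refine ⟨hDbunit, ?_, ?_⟩
  · rw [infNorm, Finset.sup'_lt_iff]
    intro i _
    exact lt_of_le_of_lt (hrs i) hc1
  · letI : SeminormedRing (Matrix (Fin n) (Fin n) ℝ) := Matrix.linftyOpSemiNormedRing
    letI : NormedRing (Matrix (Fin n) (Fin n) ℝ) := Matrix.linftyOpNormedRing
    letI : NormedAlgebra ℝ (Matrix (Fin n) (Fin n) ℝ) := Matrix.linftyOpNormedAlgebra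
    set J : Matrix (Fin n) (Fin n) ℝ := 1 - Db⁻¹ * A with hJdef
    have hJnorm : ‖J‖ < 1 := by
      rw [← heq, Matrix.linfty_opNorm_def]
      rw [show (1:ℝ) = ((1:NNReal):ℝ) by norm_num, NNReal.coe_lt_coe]
      rw [Finset.sup_lt_iff (by norm_num : (⊥ : NNReal) < 1)]
      intro i _
      rw [← NNReal.coe_lt_coe]
      push_cast
      calc ∑ j, ‖(Db⁻¹ * (Db - A)) i j‖ = ∑ j, |(Db⁻¹ * (Db - A)) i j| := by
            simp [Real.norm_eq_abs]
        _ ≤ c := hrs i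
        _ < 1 := hc1
    have hsum : Summable (fun k : ℕ => J ^ k) :=
      summable_geometric_of_norm_lt_one hJnorm
    have htend := hsum.hasSum.tendsto_sum_nat
    have hinv : (∑' k : ℕ, J ^ k) * Db⁻¹ = A⁻¹ := by
      have h1 : (∑' k : ℕ, J ^ k) * (1 - J) = 1 := geom_series_mul_neg J hJnorm
      have h2 : (1 : Matrix (Fin n) (Fin n) ℝ) - J = Db⁻¹ * A := by
        rw [hJdef, sub_sub_cancel]
      rw [h2, ← Matrix.mul_assoc] at h1
      exact (Matrix.inv_eq_left_inv h1).symm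
    rw [← hinv]
    have := htend.mul (tendsto_const_nhds (x := Db⁻¹))
    simpa [Finset.sum_mul] using this
end

section
/- Let A and D be SPD with eigenvalues of D⁻¹A contained in [α, β] ⊂ (0, 2), and let M_k⁻¹ = p_k(D⁻¹A)D⁻¹ with p_k(x) = ∑_{j=0}^{k-1}(1-x)^j, k odd. Then the eigenvalues of M_k⁻¹A lie in [1 - γ^k, 1 + γ^k] where γ = max(|1-α|, |1-β|) < 1; consequently the spectral condition number of M_k⁻¹A is at most (1+γ^k)/(1-γ^k), which tends to 1 as k → ∞. -/
/-!
Writing `D = yᴴ y` with `y` invertible, `D⁻¹A = y⁻¹ S y` for the Hermitian matrix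
`S = (y⁻¹)ᴴ A y⁻¹`. Since `M_k = p_k(D⁻¹A) D⁻¹ A = 1 - (1 - D⁻¹A)^k` is a polynomial in `D⁻¹A`,
it is conjugate to the same polynomial in `S`, and the spectral mapping theorem of the
functional calculus of `S` gives `spectrum M_k = {1 - (1 - r)^k | r ∈ spectrum (D⁻¹A)}`.
For `r ∈ [α, β]` we have `|1 - r| ≤ γ`, so these eigenvalues lie in `[1 - γ^k, 1 + γ^k]`.
-/

open Filter Topology Polynomial

theorem sum_one_sub_pow_mul {R : Type*} [Ring R] (x : R) (k : ℕ) :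
    (∑ j ∈ Finset.range k, (1 - x) ^ j) * x = 1 - (1 - x) ^ k := by
  simpa only [sub_sub_cancel] using geom_sum_mul_neg (1 - x) k

theorem aeval_units_conj {R A : Type*} [CommSemiring R] [Ring A] [Algebra R A]
    (u : Aˣ) (a : A) (q : R[X]) :
    aeval (↑u⁻¹ * a * ↑u) q = ↑u⁻¹ * aeval a q * ↑u := by
  induction q using Polynomial.induction_on' with
  | add p q hp hq => simp only [map_add, hp, hq, mul_add, add_mul]
  | monomial n r =>
    simp only [aeval_monomial, Units.conj_pow', Algebra.mul_smul_comm, Algebra.smul_mul_assoc,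
      ← Algebra.smul_def]

theorem spectrum_aeval_units_conj {A : Type*} [Ring A] [StarRing A] [Algebra ℝ A]
    [TopologicalSpace A] [ContinuousFunctionalCalculus ℝ A IsSelfAdjoint]
    {s : A} (hs : IsSelfAdjoint s) (u : Aˣ) (q : ℝ[X]) :
    spectrum ℝ (aeval (↑u⁻¹ * s * ↑u) q) = q.eval '' spectrum ℝ (↑u⁻¹ * s * ↑u) := by
  rw [aeval_units_conj, spectrum.units_conjugate', spectrum.units_conjugate',
    ← cfc_polynomial q s, cfc_map_spectrum q.eval s]

namespace Matrix

open scoped ComplexOrder MatrixOrder in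
theorem PosDef.exists_inv_mul_eq_units_conj {n 𝕜 : Type*} [Fintype n] [DecidableEq n]
    [RCLike 𝕜] {A D : Matrix n n 𝕜} (hA : A.IsHermitian) (hD : D.PosDef) :
    ∃ (u : (Matrix n n 𝕜)ˣ) (S : Matrix n n 𝕜), S.IsHermitian ∧
      D⁻¹ * A = (↑u⁻¹ : Matrix n n 𝕜) * S * u := by
  obtain ⟨y, hy, rfl⟩ :=
    CStarAlgebra.isStrictlyPositive_iff_eq_star_mul_self.mp hD.isStrictlyPositive
  lift y to (Matrix n n 𝕜)ˣ using hy
  refine ⟨y, (↑y⁻¹ : Matrix n n 𝕜)ᴴ * A * (↑y⁻¹ : Matrix n n 𝕜),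
    isHermitian_conjTranspose_mul_mul _ hA, ?_⟩
  rw [mul_inv_rev, star_eq_conjTranspose, ← conjTranspose_nonsing_inv, coe_units_inv]
  simp [mul_assoc]

end Matrix

theorem one_sub_one_sub_pow_mem_Icc {r γ : ℝ} (hr : |1 - r| ≤ γ) (k : ℕ) :
    1 - (1 - r) ^ k ∈ Set.Icc (1 - γ ^ k) (1 + γ ^ k) := by
  have hpow : |(1 - r) ^ k| ≤ γ ^ k := by
    rw [abs_pow]
    exact pow_le_pow_left₀ (abs_nonneg _) hr k
  obtain ⟨hlow, hupp⟩ := abs_le.mp hpow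
  constructor <;> linarith

theorem le_div_mul_of_le_one_add_of_one_sub_le {c μ ν : ℝ} (hc0 : 0 ≤ c) (hc1 : c < 1)
    (hμ : μ ≤ 1 + c) (hν : 1 - c ≤ ν) :
    μ ≤ (1 + c) / (1 - c) * ν := by
  rw [div_mul_eq_mul_div, le_div_iff₀ (by linarith)]
  nlinarith

theorem tendsto_one_add_pow_div_one_sub_pow {γ : ℝ} (hγ0 : 0 ≤ γ) (hγ1 : γ < 1) :
    Tendsto (fun m : ℕ => (1 + γ ^ m) / (1 - γ ^ m)) atTop (𝓝 1) := by
  have h := tendsto_pow_atTop_nhds_zero_of_lt_one hγ0 hγ1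
  have hquot := (tendsto_const_nhds (x := (1 : ℝ)) |>.add h).div
    (tendsto_const_nhds (x := (1 : ℝ)) |>.sub h) (by norm_num)
  rwa [add_zero, sub_zero, div_one] at hquot

theorem neumann_preconditioned_spectrum_bound_general {n : ℕ} (A D : Matrix (Fin n) (Fin n) ℝ)
    (hA : A.PosDef) (hD : D.PosDef) (α β : ℝ)
    (hα : 0 < α) (hβ : β < 2) (hαβ : α ≤ β)
    (hspec : spectrum ℝ (D⁻¹ * A) ⊆ Set.Icc α β)
    (k : ℕ) (hk1 : 1 ≤ k) :
    let γ := max |1 - α| |1 - β|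
    let Mk := (∑ j ∈ Finset.range k, (1 - D⁻¹ * A) ^ j * D⁻¹) * A
    γ < 1 ∧
      spectrum ℝ Mk ⊆ Set.Icc (1 - γ ^ k) (1 + γ ^ k) ∧
      (∀ μ ∈ spectrum ℝ Mk, ∀ ν ∈ spectrum ℝ Mk,
        μ ≤ ((1 + γ ^ k) / (1 - γ ^ k)) * ν) ∧
      Tendsto (fun m : ℕ => (1 + γ ^ m) / (1 - γ ^ m)) atTop (𝓝 1) := by
  intro γ Mk
  have hγ0 : 0 ≤ γ := (abs_nonneg _).trans (le_max_left _ _)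
  have hγ1 : γ < 1 := max_lt (abs_lt.mpr ⟨by linarith, by linarith⟩)
    (abs_lt.mpr ⟨by linarith, by linarith⟩)
  have hMk : Mk = aeval (D⁻¹ * A) (1 - (1 - X) ^ k : ℝ[X]) := by
    simp only [Mk, ← sum_one_sub_pow_mul, Finset.sum_mul, mul_assoc]
    simp
  obtain ⟨u, S, hS, hX⟩ := hD.exists_inv_mul_eq_units_conj hA.isHermitian
  have hspecMk : spectrum ℝ Mk ⊆ Set.Icc (1 - γ ^ k) (1 + γ ^ k) := by
    rw [hMk, hX, spectrum_aeval_units_conj hS, ← hX]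
    rintro _ ⟨r, hr, rfl⟩
    obtain ⟨hαr, hrβ⟩ := hspec hr
    simpa [max_comm] using
      one_sub_one_sub_pow_mem_Icc (abs_le_max_abs_abs (by linarith : 1 - β ≤ 1 - r)
        (by linarith : 1 - r ≤ 1 - α)) k
  have hγk : γ ^ k < 1 := pow_lt_one₀ hγ0 hγ1 (by omega)
  refine ⟨hγ1, hspecMk, fun μ hμ ν hν => ?_, tendsto_one_add_pow_div_one_sub_pow hγ0 hγ1⟩
  exact le_div_mul_of_le_one_add_of_one_sub_le (pow_nonneg hγ0 k) hγk (hspecMk hμ).2 (hspecMk hν).1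

/-- If `A`, `D` are SPD with the spectrum of `D⁻¹A` contained in `[α,β] ⊂ (0,2)` and `k` odd,
then the eigenvalues of `M_k⁻¹A` lie in `[1-γ^k, 1+γ^k]` with `γ = max(|1-α|,|1-β|) < 1`;
consequently the spectral condition number of `M_k⁻¹A` is at most `(1+γ^k)/(1-γ^k)`,
which tends to `1` as `k → ∞`. -/
theorem neumann_preconditioned_spectrum_bound {n : ℕ} (A D : Matrix (Fin n) (Fin n) ℝ)
    (hA : A.PosDef) (hD : D.PosDef) (α β : ℝ)
    (hα : 0 < α) (hβ : β < 2) (hαβ : α ≤ β)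
    (hspec : spectrum ℝ (D⁻¹ * A) ⊆ Set.Icc α β)
    (k : ℕ) (hk1 : 1 ≤ k) (hk : Odd k) :
    let γ := max |1 - α| |1 - β|
    let Mk := (∑ j ∈ Finset.range k, (1 - D⁻¹ * A) ^ j * D⁻¹) * A
    γ < 1 ∧
      spectrum ℝ Mk ⊆ Set.Icc (1 - γ ^ k) (1 + γ ^ k) ∧
      (∀ μ ∈ spectrum ℝ Mk, ∀ ν ∈ spectrum ℝ Mk,
        μ ≤ ((1 + γ ^ k) / (1 - γ ^ k)) * ν) ∧
      Tendsto (fun m : ℕ => (1 + γ ^ m) / (1 - γ ^ m)) atTop (𝓝 1) :=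
  neumann_preconditioned_spectrum_bound_general A D hA hD α β hα hβ hαβ hspec k hk1
end
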